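/- For every sentence φ of the empty first-order language: φ holds in every infinite structure for the empty language if and only if SAPP ⊨ φ', where φ' is the L-sentence obtained from φ via the inclusion of the empty language into L. -/

import Mathlib

open FirstOrder Language Structure BoundedFormula

/-- The relation symbols of the language `L`: a single binary relation `O`. -/
inductive PerpRel : ℕ → Type
  | o : PerpRel 2

/-- The first-order language with a single binary relation symbol `O`. -/
def L : Language := ⟨fun _ => Empty, PerpRel⟩
  deriving IsRelational

/-- The binary relation symbol `O` of `L`. -/
abbrev oSym : L.Relations 2 := .o

/-- `O(xᵢ, xⱼ)` as a bounded formula. -/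
def oBF {n : ℕ} (i j : Fin n) : L.BoundedFormula Empty n :=
  oSym.boundedFormula₂ (&i) (&j)

/-- Finite conjunction of a list of bounded formulas. -/
def andAll {n : ℕ} : List (L.BoundedFormula Empty n) → L.BoundedFormula Empty n
  | [] => ⊤
  | φ :: l => φ ⊓ andAll l

/-- λ₁ₙ : ∀y₁…∀yₙ∀s(O(s,y₁) ∧ … ∧ O(s,yₙ) → ∃t(t ≠ y₁ ∧ … ∧ t ≠ yₙ ∧ O(s,t))).
Variables: y₁,…,yₙ are de Bruijn indices 0,…,n-1, s is index n, t is index n+1. -/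
def lam1 (n : ℕ) : L.Sentence :=
  ((andAll ((List.finRange n).map fun i => oBF (Fin.last n) i.castSucc)).imp
    ((andAll ((List.finRange n).map fun i =>
        ∼((&(Fin.last (n + 1))) =' (&(i.castSucc.castSucc)))) ⊓
      oBF ((Fin.last n).castSucc) (Fin.last (n + 1))).ex)).alls

/-- λ₂ₙ : ∀y₁…∀yₙ∃s(¬O(s,y₁) ∧ … ∧ ¬O(s,yₙ)).
Variables: y₁,…,yₙ are de Bruijn indices 0,…,n-1, s is index n. -/
def lam2 (n : ℕ) : L.Sentence :=
  ((andAll ((List.finRange n).map fun i => ∼(oBF (Fin.last n) i.castSucc))).ex).alls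

/-- λ₃ : ∀x ¬O(x,x). -/
def lam3 : L.Sentence := (∼(oBF (0 : Fin 1) 0)).alls

/-- λ₄ : ∀x∀y(O(x,y) → O(y,x)). -/
def lam4 : L.Sentence := ((oBF (0 : Fin 2) 1).imp (oBF (1 : Fin 2) 0)).alls

/-- λ₅ : ∀x∃y O(x,y). -/
def lam5 : L.Sentence := ((oBF (0 : Fin 2) 1).ex).alls

/-- λ₆ : ∀x∀y∀z∀t(O(x,z) ∧ O(y,z) ∧ O(x,t) → O(y,t)). -/
def lam6 : L.Sentence :=
  ((oBF (0 : Fin 4) 2 ⊓ oBF (1 : Fin 4) 2 ⊓ oBF (0 : Fin 4) 3).imp (oBF (1 : Fin 4) 3)).alls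

/-- The theory SAPP. -/
def SAPP : L.Theory :=
  {φ | ∃ n, 1 ≤ n ∧ φ = lam1 n} ∪ {φ | ∃ n, 2 ≤ n ∧ φ = lam2 n} ∪ {lam3, lam4, lam5, lam6}

/-- Every type is (uniquely) a structure for the empty language. -/
instance (M : Type*) : Language.empty.Structure M := Language.emptyStructure

/-!
Every model of SAPP is infinite: λ₅ gives a point `s` with an `O`-neighbour, and the λ₁ₙ then
forbid `s` from having only finitely many. Conversely SAPP has an infinite model, e.g.
`ℕ × Bool × ℕ` with `O` relating points of the same class on opposite sides. By the Łoś–Vaught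
test the theory of infinite sets in the empty language is complete, so an equality-only sentence
holds in one infinite set iff it holds in all of them; both sides of the equivalence therefore
say that `φ` holds in infinite sets.
-/

theorem lam1_mem_SAPP {n : ℕ} (hn : 1 ≤ n) : lam1 n ∈ SAPP :=
  Or.inl (Or.inl ⟨n, hn, rfl⟩)

theorem lam5_mem_SAPP : lam5 ∈ SAPP := by simp [SAPP]

section

variable {M : Type*} [L.Structure M]

def oRel (a b : M) : Prop := RelMap oSym ![a, b]

@[simp]
theorem realize_oBF {n : ℕ} (i j : Fin n) {v : Empty → M} {xs : Fin n → M} :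
    (oBF i j).Realize v xs ↔ oRel (xs i) (xs j) := by
  simp only [oBF, realize_rel₂]
  rfl

@[simp]
theorem realize_andAll {n : ℕ} (l : List (L.BoundedFormula Empty n)) {v : Empty → M}
    {xs : Fin n → M} : (andAll l).Realize v xs ↔ ∀ ψ ∈ l, ψ.Realize v xs := by
  induction l with
  | nil => simp [andAll]
  | cons ψ l ih => simp [andAll, ih]

theorem realize_lam1 {n : ℕ} : M ⊨ lam1 n ↔
    ∀ (ys : Fin n → M) (s : M), (∀ i, oRel s (ys i)) → ∃ t, (∀ i, t ≠ ys i) ∧ oRel s t := by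
  simp only [lam1, Sentence.Realize, realize_alls, realize_imp, realize_ex, realize_inf,
    realize_andAll, List.mem_map, List.mem_finRange, true_and, forall_exists_index,
    forall_apply_eq_imp_iff, realize_not, realize_bdEqual, Function.comp_apply,
    Term.realize_var, Sum.elim_inr, realize_oBF, Fin.snoc_castSucc, Fin.snoc_last]
  exact ⟨fun h ys s hs => by simpa using h (Fin.snoc ys s) (by simpa using hs), fun h xs => h _ _⟩

theorem realize_lam2 {n : ℕ} : M ⊨ lam2 n ↔ ∀ ys : Fin n → M, ∃ s, ∀ i, ¬oRel s (ys i) := by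
  simp [lam2, Sentence.Realize]

theorem realize_lam3 : M ⊨ lam3 ↔ ∀ x : M, ¬oRel x x := by
  simp only [lam3, Sentence.Realize, realize_alls, realize_not, realize_oBF]
  exact ⟨fun h x => h fun _ => x, fun h xs => h (xs 0)⟩

theorem realize_lam4 : M ⊨ lam4 ↔ ∀ x y : M, oRel x y → oRel y x := by
  simp only [lam4, Sentence.Realize, realize_alls, realize_imp, realize_oBF]
  exact ⟨fun h x y => h ![x, y], fun h xs => h (xs 0) (xs 1)⟩

theorem realize_lam5 : M ⊨ lam5 ↔ ∀ x : M, ∃ y, oRel x y := by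
  simp only [lam5, Sentence.Realize, realize_alls, realize_ex, realize_oBF]
  exact ⟨fun h x => by simpa [Fin.snoc] using h fun _ => x,
    fun h xs => by simpa [Fin.snoc] using h (xs 0)⟩

theorem realize_lam6 : M ⊨ lam6 ↔ ∀ x y z t : M, oRel x z → oRel y z → oRel x t → oRel y t := by
  simp only [lam6, Sentence.Realize, realize_alls, realize_imp, realize_inf, realize_oBF, and_imp]
  exact ⟨fun h x y z t => h ![x, y, z, t], fun h xs => h (xs 0) (xs 1) (xs 2) (xs 3)⟩

theorem infinite_setOf_oRel (h : ∀ n, 1 ≤ n → M ⊨ lam1 n) {s t : M} (hst : oRel s t) :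
    {u | oRel s u}.Infinite := by
  intro hfin
  have := hfin.to_subtype
  obtain ⟨n, ⟨e⟩⟩ := Finite.exists_equiv_fin {u | oRel s u}
  have hn : 1 ≤ n := Fin.pos_iff_nonempty.2 ⟨e ⟨t, hst⟩⟩
  obtain ⟨u, hu, hsu⟩ := realize_lam1.1 (h n hn) (fun i => e.symm i) s fun i => (e.symm i).2
  exact hu (e ⟨u, hsu⟩) (by simp)

theorem infinite_of_model_SAPP [Nonempty M] (h : M ⊨ SAPP) : Infinite M := by
  obtain ⟨t, hst⟩ := realize_lam5.1 (h.realize_of_mem _ lam5_mem_SAPP) (Classical.arbitrary M)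
  have hinf := infinite_setOf_oRel (fun n hn => h.realize_of_mem _ (lam1_mem_SAPP hn)) hst
  exact Set.infinite_univ_iff.1 (hinf.mono (Set.subset_univ _))

end

/-- `O` relates two points of the same class `a : A` lying on opposite sides, so every class
is a complete bipartite graph between two copies of `B`. -/
def SappModel (A B : Type*) : Type _ := A × Bool × B

namespace SappModel

variable {A B : Type*}

instance : L.Structure (SappModel A B) where
  RelMap
    | .o, x => (x 1).1 = (x 0).1 ∧ (x 1).2.1 = !(x 0).2.1

instance [Nonempty A] [Nonempty B] : Nonempty (SappModel A B) :=
  inferInstanceAs (Nonempty (A × Bool × B))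

theorem oRel_iff {x y : SappModel A B} : oRel x y ↔ y.1 = x.1 ∧ y.2.1 = !x.2.1 := Iff.rfl

theorem realize_lam1 [Infinite B] (n : ℕ) : SappModel A B ⊨ lam1 n := by
  refine _root_.realize_lam1.2 fun ys s _ => ?_
  have hinf : {t : SappModel A B | oRel s t}.Infinite :=
    Set.infinite_of_injective_forall_mem (f := fun b : B => (s.1, !s.2.1, b))
      (fun b b' h => (Prod.ext_iff.1 (Prod.ext_iff.1 h).2).2) fun b => oRel_iff.2 ⟨rfl, rfl⟩
  obtain ⟨t, hst, ht⟩ := (hinf.sdiff (Set.finite_range ys)).nonempty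
  exact ⟨t, fun i hti => ht ⟨i, hti.symm⟩, hst⟩

theorem realize_lam2 [Infinite A] [Nonempty B] (n : ℕ) : SappModel A B ⊨ lam2 n := by
  refine _root_.realize_lam2.2 fun ys => ?_
  obtain ⟨a, ha⟩ := (Set.finite_range fun i => (ys i).1).infinite_compl.nonempty
  exact ⟨(a, true, Classical.arbitrary B), fun i hi => ha ⟨i, (oRel_iff.1 hi).1⟩⟩

instance [Infinite A] [Infinite B] : SappModel A B ⊨ SAPP := by
  refine Theory.model_iff _ |>.2 ?_
  rintro φ (((⟨n, -, rfl⟩ | ⟨n, -, rfl⟩)) | hφ)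
  · exact realize_lam1 n
  · exact realize_lam2 n
  simp only [Set.mem_insert_iff, Set.mem_singleton_iff] at hφ
  rcases hφ with rfl | rfl | rfl | rfl
  · exact _root_.realize_lam3.2 fun x hx => by simpa using (oRel_iff.1 hx).2
  · exact _root_.realize_lam4.2 fun x y hxy => by grind [oRel_iff]
  · exact _root_.realize_lam5.2 fun x => ⟨(x.1, !x.2.1, x.2.2), oRel_iff.2 ⟨rfl, rfl⟩⟩
  · exact _root_.realize_lam6.2 fun x y z t => by grind [oRel_iff]

end SappModel

theorem empty_realize_sentence_iff_of_infinite (φ : Language.empty.Sentence) (M N : Type*)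
    [Infinite M] [Infinite N] : M ⊨ φ ↔ N ⊨ φ := by
  have := (model_infiniteTheory_iff Language.empty).2 ‹Infinite M›
  have := (model_infiniteTheory_iff Language.empty).2 ‹Infinite N›
  rw [Cardinal.empty_infinite_Theory_isComplete.realize_sentence_iff φ M,
    Cardinal.empty_infinite_Theory_isComplete.realize_sentence_iff φ N]

/-- a sentence φ of the empty language holds in every infinite structure iff
the L-sentence φ' obtained via the inclusion of the empty language into L is a logical
consequence of SAPP. -/
theorem statement_15 (φ : Language.empty.Sentence) :
    (∀ (M : Type*) [Infinite M], M ⊨ φ) ↔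
      SAPP ⊨ᵇ (LHom.ofIsEmpty Language.empty L).onSentence φ := by
  constructor
  · intro h
    refine Theory.models_sentence_iff.2 fun N => ?_
    have := infinite_of_model_SAPP N.is_model
    rw [LHom.realize_onSentence]
    exact (empty_realize_sentence_iff_of_infinite φ (ULift ℕ) N).1 (h _)
  · intro h M _
    let N := Theory.ModelType.of SAPP (SappModel ℕ ℕ)
    have := infinite_of_model_SAPP N.is_model
    have hN := Theory.models_sentence_iff.1 h N
    rw [LHom.realize_onSentence] at hN
    exact (empty_realize_sentence_iff_of_infinite φ N M).1 hN
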